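/- Let f and i be affine permutations of period n such that the factorization f = i·(i⁻¹f) is length-additive (i.e. i ≤_R f). If T_L(f) ∩ T_R(f) = ∅, then ℓ(i⁻¹·f·i) = ℓ(f). -/

import Mathlib

/-!
A length counts inversions `(a, b)`, `a < b`, `f b < f a`, up to the diagonal translation
`(a, b) ↦ (a + n, b + n)`, so a translation-equivariant injection between inversion sets
compares lengths. This gives: `ℓ(u v) = ℓ(u) + ℓ(v)` iff `u` reverses no inversion of `v`;
and `t_{c,d} ∈ T_R(u)` whenever `c < d` and `u d < u c`.

Write `f = i g` with `g = i⁻¹ f`. Length-additivity of `f = i g` and of `f⁻¹ = g⁻¹ i⁻¹` says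
that every inversion of `g` is one of `f` and every inversion of `i⁻¹` is one of `f⁻¹`. If `g`
reversed an inversion `(a, b)` of `i`, then `(i b, i a)` would be an inversion of both `f` and
`f⁻¹`, and `t_{i b, i a}` would lie in `T_L(f) ∩ T_R(f)`. Hence `i⁻¹ f i = g i` is
length-additive, of length `ℓ(g) + ℓ(i) = ℓ(f)`.
-/

open Finset

/-- `f` is an affine permutation of period `n`: an `n`-periodic bijection of `ℤ`. -/
def IsAffinePerm (n : ℕ) (f : Equiv.Perm ℤ) : Prop :=
  ∀ a : ℤ, f (a + n) = f a + n

/-- The length of an affine permutation of period `n`: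
the number of pairs `(i, j)` with `i ∈ {1,…,n}`, `j ∈ ℤ`, `i < j` and `f i > f j`. -/
noncomputable def aLen (n : ℕ) (f : Equiv.Perm ℤ) : ℕ :=
  Set.ncard {p : ℤ × ℤ | 1 ≤ p.1 ∧ p.1 ≤ (n : ℤ) ∧ p.1 < p.2 ∧ f p.2 < f p.1}

/-- `t` is the affine transposition `t_{a,b}` (period `n`): it swaps `a + jn` and `b + jn`
for all `j : ℤ` and fixes everything else; requires `a ≢ b (mod n)`. -/
def IsAffTranspAt (n : ℕ) (a b : ℤ) (t : Equiv.Perm ℤ) : Prop :=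
  ¬ ((n : ℤ) ∣ b - a) ∧
    ∀ x : ℤ,
      ((n : ℤ) ∣ x - a → t x = x - a + b) ∧
      ((n : ℤ) ∣ x - b → t x = x - b + a) ∧
      (¬ (n : ℤ) ∣ x - a → ¬ (n : ℤ) ∣ x - b → t x = x)

/-- `t` is an affine transposition of period `n`. -/
def IsAffTransp (n : ℕ) (t : Equiv.Perm ℤ) : Prop :=
  ∃ a b : ℤ, IsAffTranspAt n a b t

/-- The right associated reflections `T_R(f)`: affine transpositions `t` with `ℓ(f t) < ℓ(f)`. -/
def TR (n : ℕ) (f : Equiv.Perm ℤ) : Set (Equiv.Perm ℤ) :=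
  {t | IsAffTransp n t ∧ aLen n (f * t) < aLen n f}

/-- The left associated reflections `T_L(f)`: affine transpositions `t` with `ℓ(t f) < ℓ(f)`. -/
def TL (n : ℕ) (f : Equiv.Perm ℤ) : Set (Equiv.Perm ℤ) :=
  {t | IsAffTransp n t ∧ aLen n (t * f) < aLen n f}

/-- `u ≤_R f`: the factorization `f = u · (u⁻¹ f)` is length-additive. -/
def LeR (n : ℕ) (u f : Equiv.Perm ℤ) : Prop :=
  aLen n f = aLen n u + aLen n (u⁻¹ * f)

/-- `Bound k n`: bounded affine permutations, `a < f a ≤ a + n` with average shift `k`. -/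
def Bound (k n : ℕ) : Set (Equiv.Perm ℤ) :=
  {f | IsAffinePerm n f ∧ (∀ a : ℤ, a < f a ∧ f a ≤ a + n) ∧
    (∑ a ∈ Finset.Icc (1 : ℤ) (n : ℤ), (f a - a)) = (k : ℤ) * n}

/-- A permutation of `{1,…,n}` (modelled on `Fin n`) has type `(k,n)`:
`#{a : a ≤ π⁻¹ a} = k`. -/
def IsType (k n : ℕ) (π : Equiv.Perm (Fin n)) : Prop :=
  (Finset.univ.filter (fun a : Fin n => a ≤ π⁻¹ a)).card = k

/-- `f` is the lift of `π` : the affine permutation with `f a = π a` if `π a > a`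
and `f a = π a + n` otherwise (identifying `v : Fin n` with the integer `v + 1 ∈ {1,…,n}`). -/
def IsLift (n : ℕ) (π : Equiv.Perm (Fin n)) (f : Equiv.Perm ℤ) : Prop :=
  IsAffinePerm n f ∧ ∀ a : Fin n,
    f ((a.val : ℤ) + 1) =
      if (a.val : ℤ) < ((π a).val : ℤ) then ((π a).val : ℤ) + 1
      else ((π a).val : ℤ) + 1 + n

/-- The position of `a` in the cyclic (linear) order `<_i` on `Fin n` starting at `i`. -/
def cPos (n : ℕ) [NeZero n] (i a : Fin n) : ℕ := (a - i).val

/-- `a, b, c, d` is a cyclically ordered quadruple. -/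
def CyclicOrdered (n : ℕ) [NeZero n] (a b c d : Fin n) : Prop :=
  0 < cPos n a b ∧ cPos n a b < cPos n a c ∧ cPos n a c < cPos n a d

/-- Two subsets `I, J` of `Fin n` are weakly separated. -/
def WeaklySeparated (n : ℕ) [NeZero n] (I J : Finset (Fin n)) : Prop :=
  ¬ ∃ a b c d : Fin n, CyclicOrdered n a b c d ∧
      a ∈ I ∧ a ∉ J ∧ c ∈ I ∧ c ∉ J ∧ b ∈ J ∧ b ∉ I ∧ d ∈ J ∧ d ∉ I

/-- `(I_1,…,I_n)` (indexed by `Fin n`, cyclically) is a Grassmannlike necklace of type `(k,n)`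
with removal permutation `ρ` and insertion permutation `ι`. -/
def IsGrassNecklace (n k : ℕ) [NeZero n] (I : Fin n → Finset (Fin n))
    (ρ ι : Equiv.Perm (Fin n)) : Prop :=
  (∀ a : Fin n, (I a).card = k) ∧
    ∀ a : Fin n, ρ a ∈ I a ∧ I (a + 1) = insert (ι a) ((I a).erase (ρ a))

/-- Auxiliary construction of the Grassmannlike necklace with removal `ρ` and insertion `ι`. -/
def neckAux (n : ℕ) [NeZero n] (ρ ι : Equiv.Perm (Fin n)) : ℕ → Finset (Fin n)
  | 0 => Finset.univ.filter (fun a : Fin n => ρ⁻¹ a ≤ ι⁻¹ a)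
  | m + 1 => insert (ι (Fin.ofNat n m)) ((neckAux n ρ ι m).erase (ρ (Fin.ofNat n m)))

/-- The Grassmannlike necklace with removal permutation `ρ` and insertion permutation `ι`:
its first term is `{a : ρ⁻¹ a ≤ ι⁻¹ a}` and `I_{a+1} = (I_a ∖ {ρ a}) ∪ {ι a}`.
The forward Grassmann necklace of `π` is `necklace n 1 π`; the reverse Grassmann
necklace of `π` is `necklace n π⁻¹ 1`. -/
def necklace (n : ℕ) [NeZero n] (ρ ι : Equiv.Perm (Fin n)) (j : Fin n) : Finset (Fin n) :=
  neckAux n ρ ι j.val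

/-- The sorted list of positions (in the order `<_i`) of the elements of `S`. -/
def sortedShift (n : ℕ) [NeZero n] (i : Fin n) (S : Finset (Fin n)) : List ℕ :=
  (S.image (fun a => cPos n i a)).sort (· ≤ ·)

/-- `S ≤_i T` componentwise on `<_i`-sorted lists. -/
def leCyc (n : ℕ) [NeZero n] (i : Fin n) (S T : Finset (Fin n)) : Prop :=
  List.Forall₂ (· ≤ ·) (sortedShift n i S) (sortedShift n i T)

/-- The positroid `𝓜_π` of `π` (via Oh's theorem, taken as the definition). -/
def positroid (k n : ℕ) [NeZero n] (π : Equiv.Perm (Fin n)) : Set (Finset (Fin n)) :=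
  {S | S.card = k ∧ ∀ j : Fin n, leCyc n j (necklace n 1 π j) S}

/-- `v` lies strictly inside the arc from `w` clockwise to `x`. -/
def InArc (n : ℕ) [NeZero n] (w v x : Fin n) : Prop :=
  0 < cPos n w v ∧ cPos n w v < cPos n w x

/-- The chords `w ↦ x` and `y ↦ z` are noncrossing: they do not intersect,
including at boundary vertices. -/
def Noncrossing (n : ℕ) [NeZero n] (w x y z : Fin n) : Prop :=
  w ≠ y ∧ w ≠ z ∧ x ≠ y ∧ x ≠ z ∧
    ¬ ((InArc n w y x ∧ InArc n x z w) ∨ (InArc n w z x ∧ InArc n x y w))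

/-- The (distinct) chords `w ↦ x` and `y ↦ z` are crossing. -/
def Crossing (n : ℕ) [NeZero n] (w x y z : Fin n) : Prop :=
  (w ≠ y ∨ x ≠ z) ∧ ¬ Noncrossing n w x y z

/-- The noncrossing chords `w ↦ x` and `y ↦ z` are aligned:
`w <_w y <_w z <_w x`, or `w <_w x <_w z <_w y`, or `w = x` and `w <_w y <_w z`. -/
def Aligned (n : ℕ) [NeZero n] (w x y z : Fin n) : Prop :=
  Noncrossing n w x y z ∧
    ((0 < cPos n w y ∧ cPos n w y < cPos n w z ∧ cPos n w z < cPos n w x) ∨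
     (0 < cPos n w x ∧ cPos n w x < cPos n w z ∧ cPos n w z < cPos n w y) ∨
     (w = x ∧ 0 < cPos n w y ∧ cPos n w y < cPos n w z))

/-- A noncrossing toggle relating two Grassmannlike necklaces, each encoded by its pair
(removal permutation, insertion permutation): at some position `p`, the toggle is defined
(`ρ(p-1) ≠ ι(p)` and `ρ(p) ≠ ι(p-1)`), the chords `ρ(p-1) ↦ ι(p-1)` and `ρ(p) ↦ ι(p)`
are noncrossing, and the new permutations are obtained by right multiplication by the
transposition of positions `p-1, p`. -/
def NoncrossingToggle (n : ℕ) [NeZero n]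
    (N N' : Equiv.Perm (Fin n) × Equiv.Perm (Fin n)) : Prop :=
  ∃ p : Fin n,
    N.1 (p - 1) ≠ N.2 p ∧ N.1 p ≠ N.2 (p - 1) ∧
    Noncrossing n (N.1 (p - 1)) (N.2 (p - 1)) (N.1 p) (N.2 p) ∧
    N'.1 = N.1 * Equiv.swap (p - 1) p ∧ N'.2 = N.2 * Equiv.swap (p - 1) p

/-- The Plücker coordinate `Δ_I(M)`: the determinant of the `k × k` submatrix of `M`
on the columns indexed by `I` (in increasing order); junk value `0` if `I.card ≠ k`. -/
noncomputable def plucker (k n : ℕ) (M : Matrix (Fin k) (Fin n) ℂ) (I : Finset (Fin n)) : ℂ :=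
  if h : I.card = k then
    Matrix.det (Matrix.of (fun r c : Fin k => M r ((I.orderIsoOfFin h) c).1))
  else 0

/-- The matrix cone `Π°_π` over the open positroid variety of `π`: full-rank `k × n`
matrices with `Δ_J = 0` for `J ∉ 𝓜_π` and nonvanishing forward-necklace Plücker coordinates. -/
def openPos (k n : ℕ) [NeZero n] (π : Equiv.Perm (Fin n)) : Set (Matrix (Fin k) (Fin n) ℂ) :=
  {M | M.rank = k ∧
    (∀ J : Finset (Fin n), J.card = k → J ∉ positroid k n π → plucker k n M J = 0) ∧
    (∀ j : Fin n, plucker k n M (necklace n 1 π j) ≠ 0)}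

/-- `N` is the right twist of `M` along the necklace `I` with removal permutation `ρ`:
for all `a` and all `b ∈ I a`, `⟨N_a, M_b⟩ = δ_{b, ρ a}`. -/
def IsRightTwist (k n : ℕ) (I : Fin n → Finset (Fin n)) (ρ : Equiv.Perm (Fin n))
    (M N : Matrix (Fin k) (Fin n) ℂ) : Prop :=
  ∀ a : Fin n, ∀ b ∈ I a, (∑ j : Fin k, N j a * M j b) = if b = ρ a then 1 else 0

/-- `N` is the left twist of `M` along the necklace `I` with insertion permutation `ι`:
for all `a` and all `b ∈ I (a+1)`, `⟨N_a, M_b⟩ = δ_{b, ι a}`. -/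
def IsLeftTwist (k n : ℕ) [NeZero n] (I : Fin n → Finset (Fin n)) (ι : Equiv.Perm (Fin n))
    (M N : Matrix (Fin k) (Fin n) ℂ) : Prop :=
  ∀ a : Fin n, ∀ b ∈ I (a + 1), (∑ j : Fin k, N j a * M j b) = if b = ι a then 1 else 0


namespace IsAffinePerm

variable {n : ℕ} {f g : Equiv.Perm ℤ}

theorem map_add_mul (hf : IsAffinePerm n f) (x m : ℤ) : f (x + m * n) = f x + m * n := by
  induction m using Int.induction_on with
  | zero => simp
  | succ k ih => rw [show x + (k + 1) * n = x + k * n + n by ring, hf, ih]; ring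
  | pred k ih =>
    have h := hf (x + (-k - 1) * n)
    rw [show x + (-k - 1) * n + n = x + -k * n by ring, ih] at h
    linarith

theorem mul (hf : IsAffinePerm n f) (hg : IsAffinePerm n g) : IsAffinePerm n (f * g) :=
  fun a => by simp only [Equiv.Perm.mul_apply, hg a, hf (g a)]

theorem inv (hf : IsAffinePerm n f) : IsAffinePerm n f⁻¹ :=
  fun a => by rw [Equiv.Perm.inv_eq_iff_eq, hf]; simp

theorem not_dvd_sub (hf : IsAffinePerm n f) {a b : ℤ} (hab : a < b) (hfab : f b < f a) :
    ¬ (n : ℤ) ∣ b - a := by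
  rintro ⟨m, hm⟩
  have := hf.map_add_mul a m
  rw [show a + m * n = b by linarith] at this
  nlinarith

end IsAffinePerm

theorem exists_add_mul_mem_Icc {n : ℕ} (hn : 0 < n) (x : ℤ) :
    ∃ m : ℤ, x + m * n ∈ Set.Icc 1 (n : ℤ) := by
  have hn' : (0 : ℤ) < n := by exact_mod_cast hn
  refine ⟨-((x - 1) / n), ?_, ?_⟩ <;>
    linarith [Int.emod_add_mul_ediv (x - 1) n, Int.emod_nonneg (x - 1) hn'.ne',
      Int.emod_lt_of_pos (x - 1) hn']

theorem IsAffinePerm.exists_abs_sub_le {n : ℕ} {f : Equiv.Perm ℤ} (hn : 0 < n)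
    (hf : IsAffinePerm n f) : ∃ C : ℤ, ∀ x, |f x - x| ≤ C := by
  refine ⟨∑ r ∈ Finset.Icc 1 (n : ℤ), |f r - r|, fun x => ?_⟩
  obtain ⟨m, hm⟩ := exists_add_mul_mem_Icc hn x
  have hx : |f x - x| = |f (x + m * n) - (x + m * n)| := by rw [hf.map_add_mul]; ring_nf
  rw [hx]
  exact Finset.single_le_sum (f := fun r => |f r - r|) (fun _ _ => abs_nonneg _)
    (Finset.mem_Icc.mpr hm)

section PeriodicSets

variable {n : ℕ}

def pairShift (n : ℕ) (m : ℤ) (p : ℤ × ℤ) : ℤ × ℤ := (p.1 + m * n, p.2 + m * n)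

def IsPeriodicSet (n : ℕ) (S : Set (ℤ × ℤ)) : Prop :=
  ∀ p ∈ S, ∀ m : ℤ, pairShift n m p ∈ S

def window (n : ℕ) : Set (ℤ × ℤ) := {p | 1 ≤ p.1 ∧ p.1 ≤ n}

/-- For a periodic set, the number of its classes under diagonal translation by `n`. -/
noncomputable def windowCount (n : ℕ) (S : Set (ℤ × ℤ)) : ℕ := (S ∩ window n).ncard

@[simp]
theorem pairShift_zero (p : ℤ × ℤ) : pairShift n 0 p = p := by simp [pairShift]

@[simp]
theorem pairShift_pairShift (a b : ℤ) (p : ℤ × ℤ) :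
    pairShift n a (pairShift n b p) = pairShift n (a + b) p := by
  simp only [pairShift, Prod.mk.injEq]; constructor <;> ring

theorem exists_pairShift_mem_window (hn : 0 < n) (p : ℤ × ℤ) :
    ∃ m, pairShift n m p ∈ window n :=
  exists_add_mul_mem_Icc hn p.1

theorem eq_zero_of_pairShift_mem_window {p : ℤ × ℤ} {m : ℤ}
    (hp : p ∈ window n) (hm : pairShift n m p ∈ window n) : m = 0 := by
  obtain ⟨h1, h2⟩ := hp
  obtain ⟨h3, h4⟩ := hm
  simp only [pairShift] at h3 h4
  rcases lt_trichotomy m 0 with h | h | h <;> [nlinarith; exact h; nlinarith]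

theorem IsPeriodicSet.mem_iff {S : Set (ℤ × ℤ)} (hS : IsPeriodicSet n S) (m : ℤ)
    (p : ℤ × ℤ) : pairShift n m p ∈ S ↔ p ∈ S :=
  ⟨fun h => by simpa using hS _ h (-m), fun h => hS p h m⟩

theorem IsPeriodicSet.inter {S T : Set (ℤ × ℤ)} (hS : IsPeriodicSet n S)
    (hT : IsPeriodicSet n T) : IsPeriodicSet n (S ∩ T) :=
  fun p hp m => ⟨hS p hp.1 m, hT p hp.2 m⟩

theorem IsPeriodicSet.diff {S T : Set (ℤ × ℤ)} (hS : IsPeriodicSet n S)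
    (hT : IsPeriodicSet n T) : IsPeriodicSet n (S \ T) :=
  fun p hp m => ⟨hS p hp.1 m, (hT.mem_iff m p).not.2 hp.2⟩

theorem windowCount_le_of_injOn (hn : 0 < n) {S T : Set (ℤ × ℤ)} (hS : IsPeriodicSet n S)
    (hT : IsPeriodicSet n T) (hTfin : (T ∩ window n).Finite) {φ : ℤ × ℤ → ℤ × ℤ}
    (hφ : ∀ m p, φ (pairShift n m p) = pairShift n m (φ p)) (hmaps : Set.MapsTo φ S T)
    (hinj : Set.InjOn φ S) : windowCount n S ≤ windowCount n T := by
  choose k hk using exists_pairShift_mem_window (n := n) hn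
  refine Set.ncard_le_ncard_of_injOn (fun p => pairShift n (k (φ p)) (φ p))
    (fun p hp => ⟨hT _ (hmaps hp.1) _, hk _⟩) ?_ hTfin
  rintro p ⟨hpS, hpW⟩ q ⟨hqS, hqW⟩ hpq
  have hφpq : φ p = φ (pairShift n (k (φ q) - k (φ p)) q) := by
    dsimp only at hpq
    rw [hφ, sub_eq_neg_add, ← pairShift_pairShift, ← hpq]
    simp
  have hp := hinj hpS (hS q hqS _) hφpq
  rw [hp] at hpW ⊢
  rw [eq_zero_of_pairShift_mem_window hqW hpW, pairShift_zero]

theorem IsPeriodicSet.subset_of_windowCount_le (hn : 0 < n) {S T : Set (ℤ × ℤ)}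
    (hS : IsPeriodicSet n S) (hT : IsPeriodicSet n T) (hTfin : (T ∩ window n).Finite)
    (hST : S ⊆ T) (hcount : windowCount n T ≤ windowCount n S) : T ⊆ S := by
  have hW : S ∩ window n = T ∩ window n :=
    Set.eq_of_subset_of_ncard_le (Set.inter_subset_inter_left _ hST) hcount hTfin
  intro p hp
  obtain ⟨m, hm⟩ := exists_pairShift_mem_window hn p
  have : pairShift n m p ∈ S ∩ window n := hW ▸ ⟨hT p hp m, hm⟩
  exact (hS.mem_iff m p).1 this.1

theorem windowCount_inter_add_windowCount_diff {S : Set (ℤ × ℤ)} (T : Set (ℤ × ℤ))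
    (hSfin : (S ∩ window n).Finite) :
    windowCount n (S ∩ T) + windowCount n (S \ T) = windowCount n S := by
  rw [windowCount, windowCount, windowCount,
    ← Set.ncard_inter_add_ncard_sdiff_eq_ncard (S ∩ window n) T hSfin]
  congr 2 <;> ext <;> simp only [Set.mem_inter_iff, Set.mem_sdiff] <;> tauto

theorem windowCount_diff_lt (hn : 0 < n) {S T : Set (ℤ × ℤ)} (hS : IsPeriodicSet n S)
    (hT : IsPeriodicSet n T) (hSfin : (S ∩ window n).Finite) {p : ℤ × ℤ} (hpS : p ∈ S)
    (hpT : p ∈ T) : windowCount n (S \ T) < windowCount n S := by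
  obtain ⟨m, hm⟩ := exists_pairShift_mem_window hn p
  refine Set.ncard_lt_ncard ((Set.ssubset_iff_of_subset ?_).2
    ⟨pairShift n m p, ⟨hS p hpS m, hm⟩, fun h => h.1.2 (hT p hpT m)⟩) hSfin
  exact Set.inter_subset_inter_left _ Set.sdiff_subset

end PeriodicSets

section Inversions

variable {n : ℕ} {f u v : Equiv.Perm ℤ}

def inversions (f : Equiv.Perm ℤ) : Set (ℤ × ℤ) := {p | p.1 < p.2 ∧ f p.2 < f p.1}

theorem aLen_eq_windowCount (n : ℕ) (f : Equiv.Perm ℤ) :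
    aLen n f = windowCount n (inversions f) := by
  rw [aLen, windowCount]
  congr 1
  ext p
  simp only [inversions, window, Set.mem_ofPred_eq, Set.mem_inter_iff]
  tauto

theorem aLen_zero (f : Equiv.Perm ℤ) : aLen 0 f = 0 := by
  rw [aLen]
  convert Set.ncard_empty (ℤ × ℤ)
  ext p
  simp only [Set.mem_ofPred_eq, Set.mem_empty_iff_false, iff_false, Nat.cast_zero]
  omega

theorem IsAffinePerm.prodMap_pairShift (hf : IsAffinePerm n f) (m : ℤ) (p : ℤ × ℤ) :
    Prod.map f f (pairShift n m p) = pairShift n m (Prod.map f f p) := by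
  simp [pairShift, hf.map_add_mul]

theorem IsAffinePerm.isPeriodicSet_inversions (hf : IsAffinePerm n f) :
    IsPeriodicSet n (inversions f) := by
  rintro p ⟨h12, hf12⟩ m
  simp only [inversions, pairShift, Set.mem_ofPred_eq, hf.map_add_mul]
  constructor <;> linarith

theorem IsAffinePerm.finite_inversions_inter_window (hn : 0 < n) (hf : IsAffinePerm n f) :
    (inversions f ∩ window n).Finite := by
  obtain ⟨C, hC⟩ := hf.exists_abs_sub_le hn
  refine ((Set.finite_Icc 1 (n : ℤ)).prod (Set.finite_Icc 1 (n + 2 * C))).subset ?_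
  rintro p ⟨⟨h12, hf12⟩, h1, hn1⟩
  have := abs_le.1 (hC p.1)
  have := abs_le.1 (hC p.2)
  exact ⟨⟨h1, hn1⟩, by linarith, by linarith⟩

theorem aLen_le_aLen_inv (hn : 0 < n) (hf : IsAffinePerm n f) : aLen n f ≤ aLen n f⁻¹ := by
  rw [aLen_eq_windowCount, aLen_eq_windowCount]
  refine windowCount_le_of_injOn hn hf.isPeriodicSet_inversions hf.inv.isPeriodicSet_inversions
    (hf.inv.finite_inversions_inter_window hn) (φ := Prod.swap ∘ Prod.map f f)
    (fun m p => by simp [pairShift, hf.map_add_mul]) ?_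
    (Prod.swap_injective.comp_injOn (Prod.map_injective.2 ⟨f.injective, f.injective⟩).injOn)
  rintro ⟨a, b⟩ ⟨hab, hfab⟩
  simpa [inversions] using ⟨hfab, hab⟩

theorem aLen_inv (hn : 0 < n) (hf : IsAffinePerm n f) : aLen n f⁻¹ = aLen n f :=
  le_antisymm (by simpa using aLen_le_aLen_inv hn hf.inv) (aLen_le_aLen_inv hn hf)

theorem windowCount_inversions_mul_diff_le (hn : 0 < n) (hu : IsAffinePerm n u)
    (hv : IsAffinePerm n v) : windowCount n (inversions (u * v) \ inversions v) ≤ aLen n u := by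
  rw [aLen_eq_windowCount]
  refine windowCount_le_of_injOn hn ((hu.mul hv).isPeriodicSet_inversions.diff
    hv.isPeriodicSet_inversions) hu.isPeriodicSet_inversions
    (hu.finite_inversions_inter_window hn) hv.prodMap_pairShift ?_
    (Prod.map_injective.2 ⟨v.injective, v.injective⟩).injOn
  rintro ⟨a, b⟩ ⟨⟨hab, huv⟩, hv_ab⟩
  exact ⟨lt_of_le_of_ne (not_lt.1 fun h => hv_ab ⟨hab, h⟩) (v.injective.ne hab.ne), huv⟩

theorem aLen_mul_eq_add_iff (hn : 0 < n) (hu : IsAffinePerm n u) (hv : IsAffinePerm n v) :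
    aLen n (u * v) = aLen n u + aLen n v ↔ inversions v ⊆ inversions (u * v) := by
  have hsplit := windowCount_inter_add_windowCount_diff (inversions v)
    ((hu.mul hv).finite_inversions_inter_window hn)
  have hdiff := windowCount_inversions_mul_diff_le hn hu hv
  rw [aLen_eq_windowCount n (u * v), aLen_eq_windowCount n v] at *
  constructor
  · intro h
    refine (IsPeriodicSet.subset_of_windowCount_le hn
      ((hu.mul hv).isPeriodicSet_inversions.inter hv.isPeriodicSet_inversions)
      hv.isPeriodicSet_inversions (hv.finite_inversions_inter_window hn)
      Set.inter_subset_right (by omega)).trans Set.inter_subset_left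
  · intro h
    suffices aLen n u ≤ windowCount n (inversions (u * v) \ inversions v) by
      rw [Set.inter_eq_right.2 h] at hsplit
      omega
    rw [aLen_eq_windowCount]
    refine windowCount_le_of_injOn hn hu.isPeriodicSet_inversions
      ((hu.mul hv).isPeriodicSet_inversions.diff hv.isPeriodicSet_inversions)
      ((hu.mul hv).finite_inversions_inter_window hn |>.subset
        (Set.inter_subset_inter_left _ Set.sdiff_subset)) hv.inv.prodMap_pairShift ?_
      (Prod.map_injective.2 ⟨v⁻¹.injective, v⁻¹.injective⟩).injOn
    rintro ⟨c, d⟩ ⟨hcd, hudc⟩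
    have hlt : v⁻¹ c < v⁻¹ d := by
      refine lt_of_le_of_ne (not_lt.1 fun hdc => ?_) (v⁻¹.injective.ne hcd.ne)
      have := (h (a := (v⁻¹ d, v⁻¹ c)) ⟨hdc, by simpa using hcd⟩).2
      simp only [Equiv.Perm.mul_apply, Equiv.Perm.coe_inv, Equiv.apply_symm_apply] at this
      exact lt_asymm hudc this
    refine ⟨⟨hlt, by simpa using hudc⟩, fun hinv => absurd hcd (not_lt.2 ?_)⟩
    simpa using hinv.2.le

end Inversions

section Transpositions

variable {n : ℕ} {c d : ℤ} {t u : Equiv.Perm ℤ}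

theorem exists_isAffTranspAt (hcd : ¬ (n : ℤ) ∣ d - c) : ∃ t, IsAffTranspAt n c d t := by
  let g (x : ℤ) : ℤ :=
    if (n : ℤ) ∣ x - c then x - c + d else if (n : ℤ) ∣ x - d then x - d + c else x
  have hdc : ∀ x, (n : ℤ) ∣ x - d → ¬ (n : ℤ) ∣ x - c := fun x hd hc =>
    hcd (by simpa using dvd_sub hc hd)
  have hg : Function.Involutive g := by
    intro x
    by_cases hc : (n : ℤ) ∣ x - c
    · have hd : (n : ℤ) ∣ x - c + d - d := by simpa using hc
      simp [g, hc, hdc _ hd]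
    by_cases hd : (n : ℤ) ∣ x - d <;> simp [g, hc, hd]
  refine ⟨hg.toPerm, hcd, fun x => ⟨fun hc => if_pos hc, fun hd => ?_, fun hc hd => ?_⟩⟩
  · simp [g, hd, hdc x hd]
  · simp [g, hc, hd]

namespace IsAffTranspAt

theorem apply_cases (ht : IsAffTranspAt n c d t) (x : ℤ) :
    (∃ m : ℤ, x = c + m * n ∧ t x = d + m * n) ∨
      (∃ m : ℤ, x = d + m * n ∧ t x = c + m * n) ∨ t x = x := by
  obtain ⟨-, hx⟩ := ht
  by_cases hc : (n : ℤ) ∣ x - c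
  · obtain ⟨m, hm⟩ := hc
    exact Or.inl ⟨m, by linarith, by rw [(hx x).1 ⟨m, hm⟩]; linarith⟩
  by_cases hd : (n : ℤ) ∣ x - d
  · obtain ⟨m, hm⟩ := hd
    exact Or.inr (Or.inl ⟨m, by linarith, by rw [(hx x).2.1 ⟨m, hm⟩]; linarith⟩)
  · exact Or.inr (Or.inr ((hx x).2.2 hc hd))

theorem isAffinePerm (ht : IsAffTranspAt n c d t) : IsAffinePerm n t := by
  intro x
  have hx := ht.2 x
  have hxn := ht.2 (x + n)
  rw [show x + n - c = x - c + n by ring, show x + n - d = x - d + n by ring,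
    dvd_add_self_right, dvd_add_self_right] at hxn
  by_cases hc : (n : ℤ) ∣ x - c
  · rw [hx.1 hc, hxn.1 hc]; ring
  by_cases hd : (n : ℤ) ∣ x - d
  · rw [hx.2.1 hd, hxn.2.1 hd]; ring
  · rw [hx.2.2 hc hd, hxn.2.2 hc hd]

theorem apply_apply (ht : IsAffTranspAt n c d t) (x : ℤ) : t (t x) = x := by
  have hx := ht.2 x
  by_cases hc : (n : ℤ) ∣ x - c
  · rw [hx.1 hc, (ht.2 _).2.1 (by simpa using hc)]; ring
  by_cases hd : (n : ℤ) ∣ x - d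
  · rw [hx.2.1 hd, (ht.2 _).1 (by simpa using hd)]; ring
  · rw [hx.2.2 hc hd, hx.2.2 hc hd]

theorem apply_add_mul_left (ht : IsAffTranspAt n c d t) (m : ℤ) :
    t (c + m * n) = d + m * n := by
  rw [ht.isAffinePerm.map_add_mul, (ht.2 c).1 (by simp)]; ring

theorem apply_add_mul_right (ht : IsAffTranspAt n c d t) (m : ℤ) :
    t (d + m * n) = c + m * n := by
  rw [ht.isAffinePerm.map_add_mul, (ht.2 d).2.1 (by simp)]; ring

theorem inv_eq (ht : IsAffTranspAt n c d t) : t⁻¹ = t :=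
  inv_eq_of_mul_eq_one_right (Equiv.ext ht.apply_apply)

theorem lt_of_apply_lt (hu : IsAffinePerm n u) (ht : IsAffTranspAt n c d t) (hcd : c < d)
    (hud : u d < u c) {a b : ℤ} (hab : a < b) (htab : t b < t a)
    (hutab : u (t b) < u (t a)) : u b < u a := by
  rcases ht.apply_cases a with ⟨p, rfl, ha⟩ | ⟨p, rfl, ha⟩ | ha <;>
  rcases ht.apply_cases b with ⟨q, rfl, hb⟩ | ⟨q, rfl, hb⟩ | hb <;>
  simp only [ha, hb, hu.map_add_mul] at htab hutab ⊢ <;>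
  linarith

theorem aLen_mul_lt (hn : 0 < n) (hu : IsAffinePerm n u) (ht : IsAffTranspAt n c d t)
    (hcd : c < d) (hud : u d < u c) : aLen n (u * t) < aLen n u := by
  have ht' := ht.isAffinePerm
  let O : Set (ℤ × ℤ) := Set.range fun m : ℤ => pairShift n m (c, d)
  have hO : IsPeriodicSet n O := by
    rintro _ ⟨k, rfl⟩ m
    exact ⟨m + k, by simp⟩
  let φ (p : ℤ × ℤ) : ℤ × ℤ := if t p.1 < t p.2 then Prod.map t t p else p
  have hφ : ∀ m p, φ (pairShift n m p) = pairShift n m (φ p) := by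
    intro m p
    simp only [φ, ht'.prodMap_pairShift]
    simp only [pairShift, ht'.map_add_mul, add_lt_add_iff_right]
    split_ifs <;> rfl
  have hmaps : Set.MapsTo φ (inversions (u * t)) (inversions u \ O) := by
    rintro ⟨a, b⟩ ⟨hab, hutab⟩
    by_cases hflip : t a < t b
    · simp only [φ, if_pos hflip]
      refine ⟨⟨hflip, hutab⟩, ?_⟩
      rintro ⟨m, hm⟩
      simp only [pairShift, Prod.map, Prod.mk.injEq] at hm
      have ha := ht.apply_apply a
      have hb := ht.apply_apply b
      rw [← hm.1, apply_add_mul_left ht] at ha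
      rw [← hm.2, apply_add_mul_right ht] at hb
      linarith
    · simp only [φ, if_neg hflip]
      have htba : t b < t a := lt_of_le_of_ne (not_lt.1 hflip) (t.injective.ne hab.ne')
      refine ⟨⟨hab, ht.lt_of_apply_lt hu hcd hud hab htba hutab⟩, ?_⟩
      rintro ⟨m, hm⟩
      simp only [pairShift, Prod.mk.injEq] at hm
      change u (t b) < u (t a) at hutab
      rw [← hm.1, ← hm.2, apply_add_mul_left ht, apply_add_mul_right ht, hu.map_add_mul,
        hu.map_add_mul] at hutab
      linarith
  have hinj : Set.InjOn φ (inversions (u * t)) := by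
    have hflip_back : ∀ p q : ℤ × ℤ, p ∈ inversions (u * t) → Prod.map t t p = q →
        t q.1 < t q.2 := by
      rintro p q ⟨hp, -⟩ rfl
      simpa [ht.apply_apply] using hp
    intro p hp q hq hpq
    simp only [φ] at hpq
    split_ifs at hpq with hp' hq' hq'
    · exact (Prod.map_injective.2 ⟨t.injective, t.injective⟩) hpq
    · exact absurd (hflip_back p q hp hpq) hq'
    · exact absurd (hflip_back q p hq hpq.symm) hp'
    · exact hpq
  rw [aLen_eq_windowCount, aLen_eq_windowCount]
  calc windowCount n (inversions (u * t)) ≤ windowCount n (inversions u \ O) :=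
        windowCount_le_of_injOn hn (hu.mul ht').isPeriodicSet_inversions
          (hu.isPeriodicSet_inversions.diff hO) ((hu.finite_inversions_inter_window hn).subset
            (Set.inter_subset_inter_left _ Set.sdiff_subset)) hφ hmaps hinj
    _ < windowCount n (inversions u) :=
        windowCount_diff_lt hn hu.isPeriodicSet_inversions hO
          (hu.finite_inversions_inter_window hn) (p := (c, d)) ⟨hcd, hud⟩ ⟨0, by simp⟩

theorem mem_TR (hn : 0 < n) (hu : IsAffinePerm n u) (ht : IsAffTranspAt n c d t) (hcd : c < d)
    (hud : u d < u c) : t ∈ TR n u :=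
  ⟨⟨c, d, ht⟩, ht.aLen_mul_lt hn hu hcd hud⟩

theorem mem_TL (hn : 0 < n) (hu : IsAffinePerm n u) (ht : IsAffTranspAt n c d t) (hcd : c < d)
    (hud : u⁻¹ d < u⁻¹ c) : t ∈ TL n u := by
  refine ⟨⟨c, d, ht⟩, ?_⟩
  rw [← aLen_inv hn (ht.isAffinePerm.mul hu), mul_inv_rev, ht.inv_eq, ← aLen_inv hn hu]
  exact ht.aLen_mul_lt hn hu.inv hcd hud

end IsAffTranspAt

end Transpositions

theorem disjoint_inversions_inv_of_TL_inter_TR_eq_empty {n : ℕ} {f : Equiv.Perm ℤ} (hn : 0 < n)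
    (hf : IsAffinePerm n f) (hdisj : TL n f ∩ TR n f = ∅) :
    Disjoint (inversions f) (inversions f⁻¹) := by
  rw [Set.disjoint_left]
  rintro ⟨c, d⟩ ⟨hcd, hfcd⟩ ⟨-, hfcd'⟩
  obtain ⟨t, ht⟩ := exists_isAffTranspAt (hf.not_dvd_sub hcd hfcd)
  exact Set.eq_empty_iff_forall_notMem.1 hdisj t
    ⟨ht.mem_TL hn hf hcd hfcd', ht.mem_TR hn hf hcd hfcd⟩

/-- If `i ≤_R f` and `T_L(f) ∩ T_R(f) = ∅`, then `ℓ(i⁻¹·f·i) = ℓ(f)`. -/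
theorem conjugate_length_eq_of_reflections_disjoint
    (n : ℕ) (f i : Equiv.Perm ℤ)
    (hf : IsAffinePerm n f) (hi : IsAffinePerm n i)
    (hle : LeR n i f) (hdisj : TL n f ∩ TR n f = ∅) :
    aLen n (i⁻¹ * f * i) = aLen n f := by
  rcases Nat.eq_zero_or_pos n with rfl | hn
  · rw [aLen_zero, aLen_zero]
  set g := i⁻¹ * f
  have hg : IsAffinePerm n g := hi.inv.mul hf
  have hig : i * g = f := mul_inv_cancel_left i f
  have hle' : aLen n f = aLen n i + aLen n g := hle
  have hinv_g : inversions g ⊆ inversions f :=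
    hig ▸ (aLen_mul_eq_add_iff hn hi hg).1 (hig ▸ hle')
  have hinv_i : inversions i⁻¹ ⊆ inversions f⁻¹ := by
    have hgi : g⁻¹ * i⁻¹ = f⁻¹ := by rw [← mul_inv_rev, hig]
    refine hgi ▸ (aLen_mul_eq_add_iff hn hg.inv hi.inv).1 ?_
    rw [hgi, aLen_inv hn hf, aLen_inv hn hg, aLen_inv hn hi, hle', add_comm]
  have hdisj' := disjoint_inversions_inv_of_TL_inter_TR_eq_empty hn hf hdisj
  have hinv : inversions i ⊆ inversions (g * i) := by
    rintro ⟨a, b⟩ ⟨hab, hiab⟩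
    refine ⟨hab, lt_of_not_ge fun hgab => Set.disjoint_left.1 hdisj'
      (show (i b, i a) ∈ inversions f from ?_) ?_⟩
    · exact hinv_g ⟨hiab, lt_of_le_of_ne hgab (g.injective.ne (i.injective.ne hab.ne))⟩
    · exact hinv_i ⟨hiab, by simpa using hab⟩
  rw [show i⁻¹ * f * i = g * i from rfl, (aLen_mul_eq_add_iff hn hg hi).2 hinv, hle', add_comm]
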